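/- Let (S, dist_S) be a metric space with its Borel σ-algebra, A a measurable space, and p : S → A → ProbabilityMeasure S a measurable Markov kernel satisfying: for every (s,a) ∈ S×A and every 1-Lipschitz function f : S → ℝ integrable with respect to p(s,a), |∫ f d p(s,a) − f(s)| ≤ L_T. Fix d ∈ ℕ, a state s₁ ∈ S and actions a₁, …, a_d ∈ A, and let b_d be the belief: b₀ = δ_{s₁} and b_k = b_{k−1}.bind (s ↦ p(s, a_k)). Assume s ↦ dist_S(s, s₁) is b_d-integrable. Then the expected distance between two independent belief samples satisfies ∫_S ∫_S dist_S(s, s') d b_d(s) d b_d(s') ≤ 2 d L_T. -/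

import Mathlib

/-!
Since `s ↦ dist s s₁` is 1-Lipschitz, the time-Lipschitz condition says that each transition
raises its expectation by at most `L_T`; after `d` steps from `δ_{s₁}`, where it vanishes, the
belief satisfies `∫ dist s s₁ ≤ d L_T` (this is `W₁(b, δ_{s₁}) ≤ d L_T`). The triangle inequality
through `s₁` bounds the expected distance of two independent samples by twice this.
-/

open MeasureTheory ENNReal

/-- The belief over the current state given a last observed state `s₁` and a queue of actions
`as = [a₁, …, a_d]`: the iterated bind of `δ_{s₁}` through the kernel `p` with the actions of
the queue, applied in order. -/
noncomputable def belief {S A : Type*} [MeasurableSpace S]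
    (p : S → A → Measure S) (s₁ : S) (as : List A) : Measure S :=
  as.foldl (fun b a => b.bind fun s => p s a) (Measure.dirac s₁)

section

variable {S A : Type*}

def IsTimeLipschitz [PseudoMetricSpace S] [MeasurableSpace S] (p : S → A → Measure S)
    (L : ℝ) : Prop :=
  ∀ (s : S) (a : A), ∀ f : S → ℝ, LipschitzWith 1 f → Integrable f (p s a) →
    |(∫ y, f y ∂(p s a)) - f s| ≤ L

theorem IsTimeLipschitz.nonneg [PseudoMetricSpace S] [MeasurableSpace S]
    {p : S → A → Measure S} {L : ℝ} (hp : IsTimeLipschitz p L) (s : S) (a : A) : 0 ≤ L := by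
  simpa using hp s a 0 ((LipschitzWith.const 0).weaken zero_le_one) (integrable_zero _ _ _)

section Belief

variable [MeasurableSpace S] {p : S → A → Measure S} (s₁ : S)

theorem belief_append_singleton (as : List A) (a : A) :
    belief p s₁ (as ++ [a]) = (belief p s₁ as).bind fun s => p s a := by
  simp [belief, List.foldl_append]

theorem isProbabilityMeasure_belief (hp_prob : ∀ s a, IsProbabilityMeasure (p s a))
    (hp_meas : ∀ a, Measurable fun s => p s a) (as : List A) :
    IsProbabilityMeasure (belief p s₁ as) := by
  induction as using List.reverseRecOn with
  | nil => exact Measure.dirac.isProbabilityMeasure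
  | append_singleton as a ih =>
    rw [belief_append_singleton]
    exact isProbabilityMeasure_bind (hp_meas a).aemeasurable (ae_of_all _ (hp_prob · a))

theorem lintegral_belief_le (hp_prob : ∀ s a, IsProbabilityMeasure (p s a))
    (hp_meas : ∀ a, Measurable fun s => p s a) {g : S → ℝ≥0∞} (hg : Measurable g) {c : ℝ≥0∞}
    (hstep : ∀ s a, ∫⁻ y, g y ∂p s a ≤ g s + c) (as : List A) :
    ∫⁻ s, g s ∂belief p s₁ as ≤ g s₁ + as.length * c := by
  induction as using List.reverseRecOn with
  | nil => simp [belief, lintegral_dirac' _ hg]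
  | append_singleton as a ih =>
    have := isProbabilityMeasure_belief s₁ hp_prob hp_meas as
    calc ∫⁻ s, g s ∂belief p s₁ (as ++ [a])
        = ∫⁻ s, ∫⁻ y, g y ∂p s a ∂belief p s₁ as := by
          rw [belief_append_singleton,
            Measure.lintegral_bind (hp_meas a).aemeasurable hg.aemeasurable]
      _ ≤ ∫⁻ s, (g s + c) ∂belief p s₁ as := lintegral_mono (hstep · a)
      _ = ∫⁻ s, g s ∂belief p s₁ as + c := by
          rw [lintegral_add_right _ measurable_const]; simp
      _ ≤ g s₁ + as.length * c + c := by gcongr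
      _ = g s₁ + (as ++ [a]).length * c := by simp [add_mul, add_assoc]

end Belief

section Lipschitz

variable [PseudoMetricSpace S] [MeasurableSpace S] [OpensMeasurableSpace S]

/-- The hypothesis only concerns integrable `f`; an unbounded `f` is reached through its
truncations `min f n`, by monotone convergence. -/
theorem lintegral_ofReal_le_of_integral_sub_le {μ : Measure S} [IsFiniteMeasure μ] {x : S}
    {L : ℝ} (h : ∀ f : S → ℝ, LipschitzWith 1 f → Integrable f μ → ∫ y, f y ∂μ - f x ≤ L)
    {f : S → ℝ} (hf : LipschitzWith 1 f) (hf0 : 0 ≤ f) :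
    ∫⁻ y, ENNReal.ofReal (f y) ∂μ ≤ ENNReal.ofReal (f x) + ENNReal.ofReal L := by
  set g : ℕ → S → ℝ := fun n y => min (f y) n
  have hg_lip (n : ℕ) : LipschitzWith 1 (g n) := by
    simpa using hf.min (LipschitzWith.const (n : ℝ))
  have hg_meas (n : ℕ) : Measurable (g n) := (hg_lip n).continuous.measurable
  have hg_nonneg (n : ℕ) : 0 ≤ g n := fun y => le_min (hf0 y) n.cast_nonneg
  have hg_int (n : ℕ) : Integrable (g n) μ :=
    Integrable.of_bound (hg_meas n).aestronglyMeasurable n (ae_of_all _ fun y => by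
      rw [Real.norm_of_nonneg (hg_nonneg n y)]; exact min_le_right _ _)
  have hg_le (n : ℕ) :
      ∫⁻ y, ENNReal.ofReal (g n y) ∂μ ≤ ENNReal.ofReal (f x) + ENNReal.ofReal L := by
    rw [← ofReal_integral_eq_lintegral_ofReal (hg_int n) (ae_of_all _ (hg_nonneg n))]
    calc ENNReal.ofReal (∫ y, g n y ∂μ) ≤ ENNReal.ofReal (f x + L) := by
          gcongr; linarith [h _ (hg_lip n) (hg_int n), min_le_left (f x) n]
      _ ≤ ENNReal.ofReal (f x) + ENNReal.ofReal L := ofReal_add_le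
  have hf_iSup (y : S) : ENNReal.ofReal (f y) = ⨆ n : ℕ, ENNReal.ofReal (g n y) := by
    simp [g, ← inf_iSup_eq, iSup_natCast]
  have hg_mono : Monotone fun n y => ENNReal.ofReal (g n y) := fun m n hmn y =>
    ofReal_le_ofReal (min_le_min_left _ (Nat.cast_le.mpr hmn))
  calc ∫⁻ y, ENNReal.ofReal (f y) ∂μ = ∫⁻ y, ⨆ n : ℕ, ENNReal.ofReal (g n y) ∂μ :=
        lintegral_congr hf_iSup
    _ = ⨆ n : ℕ, ∫⁻ y, ENNReal.ofReal (g n y) ∂μ :=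
        lintegral_iSup (fun n => (hg_meas n).ennreal_ofReal) hg_mono
    _ ≤ ENNReal.ofReal (f x) + ENNReal.ofReal L := iSup_le hg_le

theorem integral_dist_belief_le {p : S → A → Measure S}
    (hp_prob : ∀ s a, IsProbabilityMeasure (p s a)) (hp_meas : ∀ a, Measurable fun s => p s a)
    {L : ℝ} (hp : IsTimeLipschitz p L) (s₁ : S) (as : List A)
    (hint : Integrable (fun s => dist s s₁) (belief p s₁ as)) :
    ∫ s, dist s s₁ ∂belief p s₁ as ≤ as.length * L := by
  have hstep (s : S) (a : A) :
      ∫⁻ y, ENNReal.ofReal (dist y s₁) ∂p s a ≤ ENNReal.ofReal (dist s s₁) + ENNReal.ofReal L :=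
    lintegral_ofReal_le_of_integral_sub_le (fun f hf hfi => (le_abs_self _).trans (hp s a f hf hfi))
      (LipschitzWith.dist_left s₁) fun _ => dist_nonneg
  have hbound := lintegral_belief_le s₁ hp_prob hp_meas
    (LipschitzWith.dist_left s₁).continuous.measurable.ennreal_ofReal hstep as
  rw [← ofReal_integral_eq_lintegral_ofReal hint (ae_of_all _ fun _ => dist_nonneg), dist_self,
    ofReal_zero, zero_add, ← ofReal_natCast, ← ofReal_mul (Nat.cast_nonneg _)] at hbound
  have hL : 0 ≤ (as.length : ℝ) * L := by
    cases as with
    | nil => simp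
    | cons a _ => exact mul_nonneg (Nat.cast_nonneg _) (hp.nonneg s₁ a)
  exact (ofReal_le_ofReal_iff hL).mp hbound

end Lipschitz

theorem integral_integral_dist_le_two_mul [PseudoMetricSpace S] [MeasurableSpace S]
    {μ : Measure S} [IsProbabilityMeasure μ] {x : S} (hx : Integrable (fun s => dist s x) μ) :
    ∫ s', ∫ s, dist s s' ∂μ ∂μ ≤ 2 * ∫ s, dist s x ∂μ := by
  set C := ∫ s, dist s x ∂μ
  have hx' : Integrable (fun s => dist x s) μ := by simpa only [dist_comm] using hx
  have hinner (s' : S) : ∫ s, dist s s' ∂μ ≤ C + dist x s' :=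
    calc ∫ s, dist s s' ∂μ ≤ ∫ s, (dist s x + dist x s') ∂μ :=
          integral_mono_of_nonneg (ae_of_all _ fun _ => dist_nonneg)
            (hx.add (integrable_const _)) (ae_of_all _ fun s => dist_triangle s x s')
      _ = C + dist x s' := by rw [integral_add hx (integrable_const _)]; simp [C]
  calc ∫ s', ∫ s, dist s s' ∂μ ∂μ ≤ ∫ s', (C + dist x s') ∂μ :=
        integral_mono_of_nonneg (ae_of_all _ fun _ => integral_nonneg fun _ => dist_nonneg)
          ((integrable_const C).add hx') (ae_of_all _ hinner)
    _ = 2 * C := by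
        rw [integral_add (integrable_const _) hx']
        simp only [integral_const, probReal_univ, one_smul, C, dist_comm x]
        ring

end

/-- **Lemma (Time-Lipschitz bound).** In an `L_T`-time-Lipschitz MDP, the expected distance
between two independent samples of the belief after delay `d` is at most `2 d L_T`. -/
theorem sigma_b_tlc_bound {S A : Type*} [MetricSpace S] [MeasurableSpace S] [BorelSpace S]
    [MeasurableSpace A]
    (p : S → A → Measure S) (hp_prob : ∀ s a, IsProbabilityMeasure (p s a))
    (hp_meas : Measurable fun q : S × A => p q.1 q.2)
    (L_T : ℝ)
    (hTLC : ∀ (s : S) (a : A), ∀ f : S → ℝ, LipschitzWith 1 f → Integrable f (p s a) →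
      |(∫ y, f y ∂(p s a)) - f s| ≤ L_T)
    (s₁ : S) (as : List A)
    (hb_int : Integrable (fun s => dist s s₁) (belief p s₁ as)) :
    (∫ s', ∫ s, dist s s' ∂(belief p s₁ as) ∂(belief p s₁ as)) ≤
      2 * (as.length : ℝ) * L_T := by
  have hp_meas' (a : A) : Measurable fun s => p s a := hp_meas.comp measurable_prodMk_right
  have := isProbabilityMeasure_belief s₁ hp_prob hp_meas' as
  calc (∫ s', ∫ s, dist s s' ∂(belief p s₁ as) ∂(belief p s₁ as))
      ≤ 2 * ∫ s, dist s s₁ ∂belief p s₁ as := integral_integral_dist_le_two_mul hb_int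
    _ ≤ 2 * (as.length * L_T) := by
        gcongr; exact integral_dist_belief_le hp_prob hp_meas' hTLC s₁ as hb_int
    _ = 2 * (as.length : ℝ) * L_T := by ring
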